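/- Let d = (66,56,45,16,15,8,3) and d′ = (64,60,42,20,11,9,3) (both of length r = 7), obtained by deleting the degree 39 from the multidegrees (66,56,45,39,16,15,8,3) and (64,60,42,39,20,11,9,3). Then D(d) = D(d′) = 958003200, but e_6(d) = 958003200·1370218430570 ≠ 958003200·1369971514442 = e_6(d′); in particular e_6(d) ≠ e_6(d′). -/

import Mathlib

/-- Power sum `s_k(d) = d_1^k + ⋯ + d_r^k` of a multidegree. -/
def powerSum (k : ℕ) (d : List ℕ) : ℕ := (d.map (· ^ k)).sum

/-- Total degree `D(d) = d_1 ⋯ d_r` of a multidegree. -/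
def totalDegree (d : List ℕ) : ℕ := d.prod

/-- Euler characteristic of the 6-dimensional complete intersection `X_6(d)`. -/
def e6 (d : List ℕ) : ℚ :=
  let r : ℚ := d.length
  let s1 : ℚ := powerSum 1 d
  let s2 : ℚ := powerSum 2 d
  let s3 : ℚ := powerSum 3 d
  let s4 : ℚ := powerSum 4 d
  let s5 : ℚ := powerSum 5 d
  let s6 : ℚ := powerSum 6 d
  ((totalDegree d : ℚ) / 720) *
    ((7 + r - s1) ^ 6 - 15 * (7 + r - s1) ^ 4 * (7 + r - s2)
      + 40 * (7 + r - s1) ^ 3 * (7 + r - s3) - 90 * (7 + r - s1) ^ 2 * (7 + r - s4)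
      + 45 * (7 + r - s1) ^ 2 * (7 + r - s2) ^ 2
      - 120 * (7 + r - s1) * (7 + r - s2) * (7 + r - s3)
      + 144 * (7 + r - s1) * (7 + r - s5) - 15 * (7 + r - s2) ^ 3
      + 90 * (7 + r - s2) * (7 + r - s4) + 40 * (7 + r - s3) ^ 2 - 120 * (7 + r - s6))

def dA : List ℕ := [66, 56, 45, 16, 15, 8, 3]
def dB : List ℕ := [64, 60, 42, 20, 11, 9, 3]

theorem totalDegree_dA : totalDegree dA = 958003200 := rfl

theorem totalDegree_dB : totalDegree dB = 958003200 := rfl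

theorem e6_dA : e6 dA = 958003200 * 1370218430570 := by
  norm_num [e6, powerSum, totalDegree, dA]

theorem e6_dB : e6 dB = 958003200 * 1369971514442 := by
  norm_num [e6, powerSum, totalDegree, dB]

theorem stmt7 :
    dA.length = 7 ∧ dB.length = 7 ∧
    [66, 56, 45] ++ [39] ++ [16, 15, 8, 3] = [66, 56, 45, 39, 16, 15, 8, 3] ∧
    [64, 60, 42] ++ [39] ++ [20, 11, 9, 3] = [64, 60, 42, 39, 20, 11, 9, 3] ∧
    dA = [66, 56, 45] ++ [16, 15, 8, 3] ∧
    dB = [64, 60, 42] ++ [20, 11, 9, 3] ∧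
    totalDegree dA = 958003200 ∧ totalDegree dB = 958003200 ∧
    e6 dA = 958003200 * 1370218430570 ∧ e6 dB = 958003200 * 1369971514442 ∧
    (958003200 : ℚ) * 1370218430570 ≠ 958003200 * 1369971514442 ∧
    e6 dA ≠ e6 dB := by
  have hne : (958003200 : ℚ) * 1370218430570 ≠ 958003200 * 1369971514442 := by norm_num
  exact ⟨rfl, rfl, rfl, rfl, rfl, rfl, totalDegree_dA, totalDegree_dB, e6_dA, e6_dB, hne,
    e6_dA ▸ e6_dB ▸ hne⟩
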